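/- arXiv:0712.4315 — 4 statements merged into one kernel-verified Lean document; each statement's English description precedes it below -/
import Mathlib

section
/- Let $(\sigma, V)$ be an irreducible $4$-dimensional representation of a group $G$ over an algebraically closed field of characteristic not two. Then $\wedge^2 V$ contains no $G$-invariant isotropic $3$-dimensional subspace (with respect to the form $B$ defined by the wedge pairing). -/
/-!
Every `ω` in an isotropic `W` satisfies `ω ∧ ω = 0`, so (in characteristic `≠ 2`) it is
decomposable, `ω = x ∧ y`, and its annihilator `{v | v ∧ ω = 0}` is the plane `⟨x, y⟩`.
Isotropy `ω ∧ ω' = 0` makes any two of these planes meet. Pairwise meeting planes either share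
a common line or lie in a common `3`-space, so the intersection or the sum of all these
annihilators is a nonzero proper subspace of `V`; it is `G`-invariant because `W` is.
-/

open ExteriorAlgebra

theorem exteriorPower_map_mem {k : Type*} [Field k] {V : Type*} [AddCommGroup V] [Module k V]
    (f : V →ₗ[k] V) {n : ℕ} {x : ExteriorAlgebra k V} (hx : x ∈ ⋀[k]^n V) :
    ExteriorAlgebra.map f x ∈ ⋀[k]^n V := by
  have h1 : Submodule.map (ExteriorAlgebra.map f).toLinearMap
      (LinearMap.range (ι k : V →ₗ[k] ExteriorAlgebra k V)) ≤
      LinearMap.range (ι k : V →ₗ[k] ExteriorAlgebra k V) := by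
    rintro _ ⟨y, hy, rfl⟩
    obtain ⟨v, rfl⟩ := hy
    exact ⟨f v, (ExteriorAlgebra.map_apply_ι f v).symm⟩
  have h2 : Submodule.map (ExteriorAlgebra.map f).toLinearMap (⋀[k]^n V) ≤ ⋀[k]^n V := by
    rw [exteriorPower, Submodule.map_pow]
    exact pow_le_pow_left' h1 n
  exact h2 ⟨x, hx, rfl⟩

/-- The induced action of a linear endomorphism on the second exterior power `⋀²V`. -/
noncomputable def exMap {k : Type*} [Field k] {V : Type*} [AddCommGroup V] [Module k V]
    (f : V →ₗ[k] V) : (⋀[k]^2 V) →ₗ[k] (⋀[k]^2 V) :=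
  (ExteriorAlgebra.map f).toLinearMap.restrict (fun _ hx => exteriorPower_map_mem f hx)

open Module

local infixr:75 " ⌋ " => CliffordAlgebra.contractLeft

section Exterior

variable {k : Type*} [Field k] {V : Type*} [AddCommGroup V] [Module k V]

theorem ι_mul_ι_anticomm (x y : V) : ι k x * ι k y = -(ι k y * ι k x) :=
  eq_neg_of_add_eq_zero_left (ι_add_mul_swap x y)

@[elab_as_elim]
theorem exteriorPower_two_induction {P : ExteriorAlgebra k V → Prop}
    (ι_mul_ι : ∀ a b : V, P (ι k a * ι k b)) (add : ∀ x y, P x → P y → P (x + y))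
    {ω : ExteriorAlgebra k V} (hω : ω ∈ ⋀[k]^2 V) : P ω := by
  rw [exteriorPower, pow_two] at hω
  refine Submodule.mul_induction_on hω ?_ add
  rintro _ ⟨a, rfl⟩ _ ⟨b, rfl⟩
  exact ι_mul_ι a b

theorem contractLeft_mem_range_ι (d : Module.Dual k V) {ω : ExteriorAlgebra k V}
    (hω : ω ∈ ⋀[k]^2 V) : ∃ u : V, d ⌋ ω = ι k u := by
  refine exteriorPower_two_induction (fun a b => ⟨d a • b - d b • a, ?_⟩) ?_ hω
  · simp [CliffordAlgebra.contractLeft_ι_mul, Algebra.algebraMap_eq_smul_one]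
  · rintro x y ⟨u, hu⟩ ⟨w, hw⟩
    exact ⟨u + w, by rw [map_add, hu, hw, map_add]⟩

theorem contractLeft_mul_of_mem_two (d : Module.Dual k V) {ω : ExteriorAlgebra k V}
    (hω : ω ∈ ⋀[k]^2 V) (x : ExteriorAlgebra k V) :
    d ⌋ (ω * x) = (d ⌋ ω) * x + ω * (d ⌋ x) := by
  refine exteriorPower_two_induction (fun a b => ?_) (fun y z hy hz => ?_) hω
  · simp only [mul_assoc, CliffordAlgebra.contractLeft_ι_mul, CliffordAlgebra.contractLeft_ι]
    simp [Algebra.algebraMap_eq_smul_one, sub_mul, mul_sub]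
    abel
  · simp only [add_mul, map_add, hy, hz]; abel

theorem ι_mul_comm_of_mem_two (u : V) {ω : ExteriorAlgebra k V} (hω : ω ∈ ⋀[k]^2 V) :
    ι k u * ω = ω * ι k u := by
  refine exteriorPower_two_induction (fun a b => ?_) (fun y z hy hz => ?_) hω
  · rw [← mul_assoc, ι_mul_ι_anticomm u a, neg_mul, mul_assoc, ι_mul_ι_anticomm u b, mul_neg,
      neg_neg, mul_assoc]
  · rw [mul_add, add_mul, hy, hz]

theorem sum_ι_mul_contractLeft_of_mem_two {ι' : Type*} [Fintype ι'] (b : Module.Basis ι' k V)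
    {ω : ExteriorAlgebra k V} (hω : ω ∈ ⋀[k]^2 V) :
    ∑ i, ι k (b i) * (b.coord i ⌋ ω) = (2 : k) • ω := by
  have expand (v : V) (x : ExteriorAlgebra k V) :
      ∑ i, b.coord i v • (ι k (b i) * x) = ι k v * x := by
    simp_rw [← smul_mul_assoc, ← Finset.sum_mul, ← map_smul, ← map_sum, b.coord_apply, b.sum_repr]
  refine exteriorPower_two_induction (fun a c => ?_) (fun y z hy hz => ?_) hω
  · simp only [CliffordAlgebra.contractLeft_ι_mul, CliffordAlgebra.contractLeft_ι,
      Algebra.algebraMap_eq_smul_one, mul_sub, mul_smul_comm, mul_one, Finset.sum_sub_distrib,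
      expand]
    rw [ι_mul_ι_anticomm c a, sub_neg_eq_add, two_smul]
  · simp only [map_add, mul_add, Finset.sum_add_distrib, hy, hz, smul_add]

/- Contracting `ω ∧ ω = 0` with `d` gives `2 (d⌋ω) ∧ ω = 0`, where the Euler identity above
provides `d` with `u := d⌋ω ≠ 0`; contracting `u ∧ ω = 0` with `h`, `h u = 1`, then gives
`ω = u ∧ (h⌋ω)`. -/
theorem exists_eq_ι_mul_ι_of_mul_self_eq_zero [FiniteDimensional k V] (h2 : (2 : k) ≠ 0)
    {ω : ExteriorAlgebra k V} (hω : ω ∈ ⋀[k]^2 V) (hsq : ω * ω = 0) :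
    ∃ x y : V, ω = ι k x * ι k y := by
  by_cases hω0 : ω = 0
  · exact ⟨0, 0, by simp [hω0]⟩
  obtain ⟨d, hd⟩ : ∃ d : Module.Dual k V, d ⌋ ω ≠ 0 := by
    by_contra! h
    have := sum_ι_mul_contractLeft_of_mem_two (Module.finBasis k V) hω
    simp only [h, mul_zero, Finset.sum_const_zero] at this
    exact hω0 ((smul_eq_zero.1 this.symm).resolve_left h2)
  obtain ⟨u, hu⟩ := contractLeft_mem_range_ι d hω
  have hu0 : u ≠ 0 := by rintro rfl; rw [map_zero] at hu; exact hd hu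
  have huω : ι k u * ω = 0 := by
    have := contractLeft_mul_of_mem_two d hω ω
    rw [hsq, map_zero, hu, ← ι_mul_comm_of_mem_two u hω, ← two_smul k] at this
    exact (smul_eq_zero.1 this.symm).resolve_left h2
  obtain ⟨h, hh⟩ := Module.Projective.exists_dual_eq_one k hu0
  obtain ⟨w, hw⟩ := contractLeft_mem_range_ι h hω
  refine ⟨u, w, ?_⟩
  have := congrArg (h ⌋ ·) huω
  simp only [CliffordAlgebra.contractLeft_ι_mul, hh, one_smul, hw, map_zero] at this
  exact sub_eq_zero.1 this

theorem ιMulti_ne_zero_of_linearIndependent {n : ℕ} {v : Fin n → V}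
    (hv : LinearIndependent k v) : ιMulti k n v ≠ 0 := by
  have := (exteriorPower.ιMulti_family_linearIndependent_field (n := n) hv).ne_zero
    (Set.powersetCard.ofFinEmbEquiv (RelEmbedding.refl (α := Fin n) (· ≤ ·)))
  simp only [exteriorPower.ιMulti_family, Equiv.symm_apply_apply, ne_eq] at this
  exact fun h => this (Subtype.ext h)

theorem ι_mul_ι_mul_ι_ne_zero {x y z : V} (h : LinearIndependent k ![x, y, z]) :
    ι k x * (ι k y * ι k z) ≠ 0 := by
  simpa [ιMulti_apply, List.ofFn_succ] using ιMulti_ne_zero_of_linearIndependent h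

theorem ι_mul_ι_mul_ι_mul_ι_ne_zero {x y z w : V} (h : LinearIndependent k ![x, y, z, w]) :
    ι k x * ι k y * (ι k z * ι k w) ≠ 0 := by
  simpa [ιMulti_apply, List.ofFn_succ, mul_assoc] using ιMulti_ne_zero_of_linearIndependent h

theorem linearIndependent_of_ι_mul_ι_ne_zero {x y : V} (h : ι k x * ι k y ≠ 0) :
    LinearIndependent k ![x, y] := by
  refine LinearIndependent.pair_iff.2 fun s t hst => ⟨?_, ?_⟩
  · have := congrArg (fun v => ι k v * ι k y) hst
    simp only [map_add, map_smul, add_mul, smul_mul_assoc, ι_sq_zero, smul_zero, add_zero,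
      map_zero, zero_mul] at this
    exact (smul_eq_zero.1 this).resolve_right h
  · have := congrArg (fun v => ι k x * ι k v) hst
    simp only [map_add, map_smul, mul_add, mul_smul_comm, ι_sq_zero, smul_zero, zero_add,
      map_zero, mul_zero] at this
    exact (smul_eq_zero.1 this).resolve_right h

theorem exists_linearIndependent_eq_ι_mul_ι [FiniteDimensional k V] (h2 : (2 : k) ≠ 0)
    {ω : ExteriorAlgebra k V} (hω : ω ∈ ⋀[k]^2 V) (hsq : ω * ω = 0) (hne : ω ≠ 0) :
    ∃ x y : V, LinearIndependent k ![x, y] ∧ ω = ι k x * ι k y := by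
  obtain ⟨x, y, rfl⟩ := exists_eq_ι_mul_ι_of_mul_self_eq_zero h2 hω hsq
  exact ⟨x, y, linearIndependent_of_ι_mul_ι_ne_zero hne, rfl⟩

def wedgeAnnihilator (ω : ExteriorAlgebra k V) : Submodule k V :=
  LinearMap.ker (LinearMap.mulRight k ω ∘ₗ ι k)

@[simp]
theorem mem_wedgeAnnihilator {ω : ExteriorAlgebra k V} {v : V} :
    v ∈ wedgeAnnihilator ω ↔ ι k v * ω = 0 :=
  Iff.rfl

theorem wedgeAnnihilator_ι_mul_ι {x y : V} (h : LinearIndependent k ![x, y]) :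
    wedgeAnnihilator (ι k x * ι k y) = Submodule.span k {x, y} := by
  ext v
  rw [mem_wedgeAnnihilator]
  constructor
  · intro hv
    by_contra hvs
    refine ι_mul_ι_mul_ι_ne_zero (linearIndependent_finCons.2 ⟨h, ?_⟩) hv
    rwa [Matrix.range_cons_cons_empty]
  · intro hv
    obtain ⟨a, b, rfl⟩ := Submodule.mem_span_pair.1 hv
    rw [map_add, map_smul, map_smul, add_mul, smul_mul_assoc, smul_mul_assoc, ← mul_assoc,
      ι_sq_zero, zero_mul, ι_mul_ι_anticomm x y, mul_neg, ← mul_assoc, ι_sq_zero, zero_mul]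
    simp

theorem span_pair_inf_ne_bot_of_ι_mul_ι_mul_eq_zero {x y x' y' : V}
    (h : LinearIndependent k ![x, y]) (h' : LinearIndependent k ![x', y'])
    (hprod : ι k x * ι k y * (ι k x' * ι k y') = 0) :
    Submodule.span k {x, y} ⊓ Submodule.span k {x', y'} ≠ ⊥ := by
  intro hbot
  have hsum : LinearIndependent k (Sum.elim ![x, y] ![x', y']) := by
    refine linearIndependent_sum.2 ⟨h, h', ?_⟩
    rw [Sum.elim_comp_inl, Sum.elim_comp_inr, Matrix.range_cons_cons_empty,
      Matrix.range_cons_cons_empty, disjoint_iff]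
    exact hbot
  refine ι_mul_ι_mul_ι_mul_ι_ne_zero ?_ hprod
  convert hsum.comp finSumFinEquiv.symm finSumFinEquiv.symm.injective using 1
  funext i
  fin_cases i <;> rfl

theorem finrank_wedgeAnnihilator_of_mul_self_eq_zero [FiniteDimensional k V] (h2 : (2 : k) ≠ 0)
    {ω : ExteriorAlgebra k V} (hω : ω ∈ ⋀[k]^2 V) (hsq : ω * ω = 0) (hne : ω ≠ 0) :
    finrank k (wedgeAnnihilator ω) = 2 := by
  obtain ⟨x, y, hxy, rfl⟩ := exists_linearIndependent_eq_ι_mul_ι h2 hω hsq hne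
  rw [wedgeAnnihilator_ι_mul_ι hxy, ← Matrix.range_cons_cons_empty x y ![],
    finrank_span_eq_card hxy, Fintype.card_fin]

theorem wedgeAnnihilator_inf_ne_bot_of_mul_eq_zero [FiniteDimensional k V] (h2 : (2 : k) ≠ 0)
    {ω ω' : ExteriorAlgebra k V} (hω : ω ∈ ⋀[k]^2 V) (hω' : ω' ∈ ⋀[k]^2 V)
    (hsq : ω * ω = 0) (hsq' : ω' * ω' = 0) (hne : ω ≠ 0) (hne' : ω' ≠ 0) (hmul : ω * ω' = 0) :
    wedgeAnnihilator ω ⊓ wedgeAnnihilator ω' ≠ ⊥ := by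
  obtain ⟨x, y, hxy, rfl⟩ := exists_linearIndependent_eq_ι_mul_ι h2 hω hsq hne
  obtain ⟨x', y', hxy', rfl⟩ := exists_linearIndependent_eq_ι_mul_ι h2 hω' hsq' hne'
  rw [wedgeAnnihilator_ι_mul_ι hxy, wedgeAnnihilator_ι_mul_ι hxy']
  exact span_pair_inf_ne_bot_of_ι_mul_ι_mul_eq_zero hxy hxy' hmul

theorem map_wedgeAnnihilator_le (f : V →ₗ[k] V) (ω : ExteriorAlgebra k V) :
    (wedgeAnnihilator ω).map f ≤ wedgeAnnihilator (ExteriorAlgebra.map f ω) := by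
  rintro _ ⟨v, hv, rfl⟩
  rw [SetLike.mem_coe, mem_wedgeAnnihilator] at hv
  rw [mem_wedgeAnnihilator, ← map_apply_ι, ← map_mul, hv, map_zero]

end Exterior

section Planes

variable {k : Type*} [Field k] {V : Type*} [AddCommGroup V] [Module k V] [FiniteDimensional k V]

theorem Submodule.eq_of_le_of_ne_bot_of_finrank_le_one {A B : Submodule k V} (hAB : A ≤ B)
    (hA : A ≠ ⊥) (hB : finrank k B ≤ 1) : A = B :=
  Submodule.eq_of_le_of_finrank_le hAB
    (hB.trans (Nat.one_le_iff_ne_zero.2 (mt Submodule.finrank_eq_zero.1 hA)))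

theorem Submodule.finrank_inf_le_one_of_not_le {P U : Submodule k V} (hP : finrank k P = 2)
    (h : ¬ P ≤ U) : finrank k ↥(P ⊓ U) ≤ 1 := by
  by_contra! h'
  exact h (Submodule.eq_of_le_of_finrank_le (inf_le_left : P ⊓ U ≤ P) (by rw [hP]; omega) ▸
    inf_le_right)

theorem Submodule.inf_le_or_le_sup_of_inf_ne_bot {P₁ P₂ P : Submodule k V}
    (h₁ : finrank k P₁ = 2) (h₂ : finrank k P₂ = 2) (h : finrank k P = 2) (hne : P₁ ≠ P₂)
    (hP₁ : P ⊓ P₁ ≠ ⊥) (hP₂ : P ⊓ P₂ ≠ ⊥) : P₁ ⊓ P₂ ≤ P ∨ P ≤ P₁ ⊔ P₂ := by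
  refine or_iff_not_imp_right.2 fun hPU => ?_
  have hZ : finrank k ↥(P₁ ⊓ P₂) ≤ 1 := finrank_inf_le_one_of_not_le h₁ fun hle =>
    hne (eq_of_le_of_finrank_le hle (by omega))
  have hPU : finrank k ↥(P ⊓ (P₁ ⊔ P₂)) ≤ 1 := finrank_inf_le_one_of_not_le h hPU
  have e₁ := eq_of_le_of_ne_bot_of_finrank_le_one (inf_le_inf_left P le_sup_left) hP₁ hPU
  have e₂ := eq_of_le_of_ne_bot_of_finrank_le_one (inf_le_inf_left P le_sup_right) hP₂ hPU
  have hle : P ⊓ P₁ ≤ P₁ ⊓ P₂ := le_inf inf_le_right ((e₁.trans e₂.symm).le.trans inf_le_right)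
  rw [← eq_of_le_of_ne_bot_of_finrank_le_one hle hP₁ hZ]
  exact inf_le_left

theorem Submodule.sInf_ne_bot_or_finrank_sSup_le_three {F : Set (Submodule k V)}
    (hF : ∀ P ∈ F, finrank k P = 2) (hmeet : ∀ P ∈ F, ∀ Q ∈ F, P ⊓ Q ≠ ⊥) :
    sInf F ≠ ⊥ ∨ finrank k ↥(sSup F) ≤ 3 := by
  by_cases hdist : ∃ P₁ ∈ F, ∃ P₂ ∈ F, P₁ ≠ P₂
  swap
  · push Not at hdist
    right
    rcases F.eq_empty_or_nonempty with rfl | ⟨P₀, hP₀⟩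
    · rw [sSup_empty, finrank_bot]
      omega
    · have := finrank_mono (sSup_le fun P hP => (hdist P hP P₀ hP₀).le)
      rw [hF P₀ hP₀] at this
      omega
  obtain ⟨P₁, h₁, P₂, h₂, hne⟩ := hdist
  have hZ := hmeet P₁ h₁ P₂ h₂
  have hcases (P) (hP : P ∈ F) : P₁ ⊓ P₂ ≤ P ∨ P ≤ P₁ ⊔ P₂ :=
    inf_le_or_le_sup_of_inf_ne_bot (hF _ h₁) (hF _ h₂) (hF P hP) hne (hmeet P hP P₁ h₁)
      (hmeet P hP P₂ h₂)
  by_cases hall : ∀ P ∈ F, P₁ ⊓ P₂ ≤ P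
  · exact Or.inl (ne_bot_of_le_ne_bot hZ (le_sInf hall))
  push Not at hall
  obtain ⟨P₃, h₃, hZ₃⟩ := hall
  have hP₃ : P₃ ≤ P₁ ⊔ P₂ := (hcases P₃ h₃).resolve_left hZ₃
  -- a plane through `P₁ ⊓ P₂` leaving `P₁ ⊔ P₂` would meet `P₃ ≤ P₁ ⊔ P₂` only in `P₁ ⊓ P₂`
  have hle : sSup F ≤ P₁ ⊔ P₂ := sSup_le fun P hP => (hcases P hP).elim (fun hZP => by
    by_contra hPU
    have h1 := finrank_inf_le_one_of_not_le (hF P hP) hPU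
    have eZ := eq_of_le_of_ne_bot_of_finrank_le_one (le_inf hZP inf_le_sup) hZ h1
    have e₃ := eq_of_le_of_ne_bot_of_finrank_le_one (inf_le_inf_left P hP₃) (hmeet P hP P₃ h₃) h1
    exact hZ₃ ((eZ.trans e₃.symm).le.trans inf_le_right)) id
  have hsum := finrank_sup_add_finrank_inf_eq P₁ P₂
  rw [hF _ h₁, hF _ h₂] at hsum
  have hZ1 := Nat.one_le_iff_ne_zero.2 (mt finrank_eq_zero.1 hZ)
  have := finrank_mono hle
  omega

end Planes

section Invariance

variable {k : Type*} [Field k] {V : Type*} [AddCommGroup V] [Module k V]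

theorem Submodule.sSup_le_comap_of_forall_exists_map_le {f : V →ₗ[k] V} {F : Set (Submodule k V)}
    (hF : ∀ P ∈ F, ∃ Q ∈ F, P.map f ≤ Q) : sSup F ≤ (sSup F).comap f :=
  sSup_le fun P hP => by
    obtain ⟨Q, hQ, hPQ⟩ := hF P hP
    exact Submodule.map_le_iff_le_comap.1 (hPQ.trans (le_sSup hQ))

theorem Submodule.sInf_le_comap_of_forall_exists_map_le {f : V →ₗ[k] V} {F : Set (Submodule k V)}
    (hF : ∀ P ∈ F, ∃ Q ∈ F, Q.map f ≤ P) : sInf F ≤ (sInf F).comap f := fun v hv =>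
  Submodule.mem_sInf.2 fun P hP => by
    obtain ⟨Q, hQ, hQP⟩ := hF P hP
    exact hQP (Submodule.mem_map_of_mem (Submodule.mem_sInf.1 hv Q hQ))

theorem Representation.exteriorAlgebra_map_apply_map_inv {G : Type*} [Group G]
    (σ : Representation k G V) (g : G) (x : ExteriorAlgebra k V) :
    ExteriorAlgebra.map (σ g) (ExteriorAlgebra.map (σ g⁻¹) x) = x := by
  rw [← AlgHom.comp_apply, map_comp_map, ← Module.End.mul_eq_comp, ← map_mul, mul_inv_cancel,
    map_one, Module.End.one_eq_id, ExteriorAlgebra.map_id, AlgHom.id_apply]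

theorem Representation.exMap_apply_ne_zero {G : Type*} [Group G] (σ : Representation k G V)
    (g : G) {ω : ⋀[k]^2 V} (hω : ω ≠ 0) : exMap (σ g) ω ≠ 0 := by
  intro h
  apply hω
  have hinv := σ.exteriorAlgebra_map_apply_map_inv g⁻¹ ω
  rw [inv_inv] at hinv
  rw [Subtype.ext_iff] at h ⊢
  rw [← hinv]
  exact (congrArg (ExteriorAlgebra.map (σ g⁻¹)) h).trans (map_zero _)

end Invariance

section AnnihilatorPlanes

variable {k : Type*} [Field k] {V : Type*} [AddCommGroup V] [Module k V]

def annihilatorPlanes (W : Submodule k (⋀[k]^2 V)) : Set (Submodule k V) :=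
  {P | ∃ ω ∈ W, ω ≠ 0 ∧ wedgeAnnihilator (ω : ExteriorAlgebra k V) = P}

variable {W : Submodule k (⋀[k]^2 V)}

theorem sSup_annihilatorPlanes_le_comap {G : Type*} [Group G] (σ : Representation k G V)
    (hinv : ∀ g : G, ∀ x ∈ W, exMap (σ g) x ∈ W) (g : G) :
    sSup (annihilatorPlanes W) ≤ (sSup (annihilatorPlanes W)).comap (σ g) := by
  refine Submodule.sSup_le_comap_of_forall_exists_map_le ?_
  rintro _ ⟨ω, hω, hω0, rfl⟩
  exact ⟨_, ⟨exMap (σ g) ω, hinv g ω hω, σ.exMap_apply_ne_zero g hω0, rfl⟩,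
    map_wedgeAnnihilator_le _ _⟩

theorem sInf_annihilatorPlanes_le_comap {G : Type*} [Group G] (σ : Representation k G V)
    (hinv : ∀ g : G, ∀ x ∈ W, exMap (σ g) x ∈ W) (g : G) :
    sInf (annihilatorPlanes W) ≤ (sInf (annihilatorPlanes W)).comap (σ g) := by
  refine Submodule.sInf_le_comap_of_forall_exists_map_le ?_
  rintro _ ⟨ω, hω, hω0, rfl⟩
  refine ⟨_, ⟨exMap (σ g⁻¹) ω, hinv g⁻¹ ω hω, σ.exMap_apply_ne_zero g⁻¹ hω0, rfl⟩, ?_⟩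
  have := map_wedgeAnnihilator_le (σ g) (ExteriorAlgebra.map (σ g⁻¹) ω)
  rwa [σ.exteriorAlgebra_map_apply_map_inv] at this

variable [FiniteDimensional k V]

theorem finrank_of_mem_annihilatorPlanes (h2 : (2 : k) ≠ 0)
    (hW : ∀ x ∈ W, ∀ y ∈ W, (x : ExteriorAlgebra k V) * y = 0) :
    ∀ P ∈ annihilatorPlanes W, finrank k P = 2 := by
  rintro _ ⟨ω, hω, hω0, rfl⟩
  exact finrank_wedgeAnnihilator_of_mul_self_eq_zero h2 ω.2 (hW ω hω ω hω)
    (by simpa using hω0)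

theorem inf_ne_bot_of_mem_annihilatorPlanes (h2 : (2 : k) ≠ 0)
    (hW : ∀ x ∈ W, ∀ y ∈ W, (x : ExteriorAlgebra k V) * y = 0) :
    ∀ P ∈ annihilatorPlanes W, ∀ Q ∈ annihilatorPlanes W, P ⊓ Q ≠ ⊥ := by
  rintro _ ⟨ω, hω, hω0, rfl⟩ _ ⟨ω', hω', hω0', rfl⟩
  exact wedgeAnnihilator_inf_ne_bot_of_mul_eq_zero h2 ω.2 ω'.2 (hW ω hω ω hω)
    (hW ω' hω' ω' hω') (by simpa using hω0) (by simpa using hω0') (hW ω hω ω' hω')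

end AnnihilatorPlanes

theorem no_invariant_isotropic_three_space_general
    {k : Type*} [Field k] (h2 : (2 : k) ≠ 0)
    {V : Type*} [AddCommGroup V] [Module k V] [FiniteDimensional k V]
    (hV : Module.finrank k V = 4)
    (η : ⋀[k]^4 V)
    (B : (⋀[k]^2 V) →ₗ[k] (⋀[k]^2 V) →ₗ[k] k)
    (hB : ∀ ω₁ ω₂ : ⋀[k]^2 V,
      (ω₁ : ExteriorAlgebra k V) * (ω₂ : ExteriorAlgebra k V)
        = B ω₁ ω₂ • (η : ExteriorAlgebra k V))
    {G : Type*} [Group G] (σ : Representation k G V)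
    (hirr : ∀ W : Submodule k V, (∀ g : G, ∀ v ∈ W, σ g v ∈ W) → W = ⊥ ∨ W = ⊤) :
    ¬ ∃ W : Submodule k (⋀[k]^2 V), Module.finrank k W = 3 ∧
        (∀ x ∈ W, ∀ y ∈ W, B x y = 0) ∧
        (∀ g : G, ∀ x ∈ W, exMap (σ g) x ∈ W) := by
  rintro ⟨W, hW3, hiso, hinv⟩
  have hW (x) (hx : x ∈ W) (y) (hy : y ∈ W) : (x : ExteriorAlgebra k V) * y = 0 := by
    rw [hB, hiso x hx y hy, zero_smul]
  obtain ⟨ω, hω, hω0⟩ := W.exists_mem_ne_zero_of_ne_bot (by rintro rfl; simp at hW3)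
  have hωF : wedgeAnnihilator (ω : ExteriorAlgebra k V) ∈ annihilatorPlanes W := ⟨ω, hω, hω0, rfl⟩
  have hω2 := finrank_of_mem_annihilatorPlanes h2 hW _ hωF
  rcases Submodule.sInf_ne_bot_or_finrank_sSup_le_three (finrank_of_mem_annihilatorPlanes h2 hW)
    (inf_ne_bot_of_mem_annihilatorPlanes h2 hW) with h | h
  · rcases hirr _ fun g _ hv => sInf_annihilatorPlanes_le_comap σ hinv g hv with hbot | htop
    · exact h hbot
    · have := Submodule.finrank_mono (htop ▸ sInf_le hωF : ⊤ ≤ _)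
      rw [finrank_top, hV] at this
      omega
  · rcases hirr _ fun g _ hv => sSup_annihilatorPlanes_le_comap σ hinv g hv with hbot | htop
    · have := Submodule.finrank_mono (hbot ▸ le_sSup hωF : _ ≤ ⊥)
      rw [finrank_bot] at this
      omega
    · rw [htop, finrank_top, hV] at h
      omega

/-- If `(σ, V)` is an irreducible `4`-dimensional representation of a group `G`
over an algebraically closed field of characteristic not two, then `⋀²V` contains no
`G`-invariant isotropic `3`-dimensional subspace, with respect to the wedge-pairing form `B`. -/
theorem no_invariant_isotropic_three_space
    {k : Type*} [Field k] [IsAlgClosed k] (h2 : (2 : k) ≠ 0)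
    {V : Type*} [AddCommGroup V] [Module k V] [FiniteDimensional k V]
    (hV : Module.finrank k V = 4)
    (η : ⋀[k]^4 V) (hη : η ≠ 0)
    (B : (⋀[k]^2 V) →ₗ[k] (⋀[k]^2 V) →ₗ[k] k)
    (hB : ∀ ω₁ ω₂ : ⋀[k]^2 V,
      (ω₁ : ExteriorAlgebra k V) * (ω₂ : ExteriorAlgebra k V)
        = B ω₁ ω₂ • (η : ExteriorAlgebra k V))
    {G : Type*} [Group G] (σ : Representation k G V)
    (hirr : ∀ W : Submodule k V, (∀ g : G, ∀ v ∈ W, σ g v ∈ W) → W = ⊥ ∨ W = ⊤) :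
    ¬ ∃ W : Submodule k (⋀[k]^2 V), Module.finrank k W = 3 ∧
        (∀ x ∈ W, ∀ y ∈ W, B x y = 0) ∧
        (∀ g : G, ∀ x ∈ W, exMap (σ g) x ∈ W) :=
  no_invariant_isotropic_three_space_general h2 hV η B hB σ hirr
end

section
/- If an irreducible $4$-dimensional representation $\sigma$ of a group $G$ over an algebraically closed field of characteristic not two has a nontrivial quadratic self-twist by a character $\chi$ with kernel $H$ of index two, then the restriction $\sigma|_H$ decomposes as a direct sum of two $2$-dimensional subrepresentations, and the $G$-translates of $\wedge^2 W$, for $W$ one of these $2$-dimensional $H$-invariant subspaces, span a $G$-invariant $2$-dimensional subspace of $\wedge^2 V$. -/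
/-!
Since `χ² = 1`, the square `T²` commutes with `σ`, so by Schur's lemma it is a nonzero scalar;
rescaling `T` by a square root of it gives an involution `S` with `S σ(g) = χ(g) σ(g) S`. Its
`±1`-eigenspaces `W₁, W₂` are complementary (as `2 ≠ 0`), preserved by `H = ker χ` and swapped by
any `g₀ ∉ H`, so both are `2`-dimensional. Hence each `σ(g)` carries the line `⋀²W₁` onto `⋀²W₁`
or `⋀²W₂`, and the translates span `⋀²W₁ ⊕ ⋀²W₂`, which is `2`-dimensional and `G`-stable.
-/

open ExteriorAlgebra

/-- The wedge `v ∧ w` as an element of the second exterior power. -/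
noncomputable def wedge {k : Type*} [Field k] {V : Type*} [AddCommGroup V] [Module k V]
    (v w : V) : ⋀[k]^2 V :=
  ⟨ιMulti k 2 ![v, w], ιMulti_range k 2 ⟨![v, w], rfl⟩⟩

open Module

section Wedge

variable {k : Type*} [Field k] {V : Type*} [AddCommGroup V] [Module k V]

lemma wedge_eq_ιMulti (v w : V) : wedge v w = exteriorPower.ιMulti k 2 ![v, w] := rfl

lemma exMap_eq_map (f : V →ₗ[k] V) : exMap f = exteriorPower.map 2 f := by
  apply exteriorPower.linearMap_ext
  ext v
  rw [LinearMap.compAlternatingMap_apply, LinearMap.compAlternatingMap_apply,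
    exteriorPower.map_apply_ιMulti]
  exact ExteriorAlgebra.map_apply_ιMulti f v

lemma exMap_wedge (f : V →ₗ[k] V) (v w : V) : exMap f (wedge v w) = wedge (f v) (f w) := by
  rw [exMap_eq_map, wedge_eq_ιMulti, exteriorPower.map_apply_ιMulti, wedge_eq_ιMulti]
  congr 1
  ext i; fin_cases i <;> rfl

lemma exMap_mul (f g : V →ₗ[k] V) : exMap (f * g) = exMap f * exMap g := by
  simp only [exMap_eq_map, End.mul_eq_comp, exteriorPower.map_comp]

lemma coe_wedge (v w : V) : ((wedge v w : ⋀[k]^2 V) : ExteriorAlgebra k V) = ι k v * ι k w := by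
  simp [wedge, ιMulti_apply]

lemma wedge_smul_add_smul (x y : V) (a b c d : k) :
    wedge (a • x + b • y) (c • x + d • y) = (a * d - b * c) • (wedge x y : ⋀[k]^2 V) := by
  have hyx : ι k y * ι k x = -(ι k x * ι k y) := eq_neg_of_add_eq_zero_right (ι_add_mul_swap x y)
  apply Subtype.ext
  rw [coe_wedge, SetLike.val_smul, coe_wedge]
  simp only [map_add, map_smul, mul_add, add_mul, smul_mul_assoc, mul_smul_comm, ι_sq_zero, hyx,
    smul_zero, smul_neg]
  module

lemma wedge_mem_span_wedge_basis {W : Submodule k V} (b : Basis (Fin 2) k W) {v w : V}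
    (hv : v ∈ W) (hw : w ∈ W) : wedge v w ∈ k ∙ (wedge (b 0 : V) (b 1) : ⋀[k]^2 V) := by
  have expand : ∀ u (hu : u ∈ W), u = b.repr ⟨u, hu⟩ 0 • (b 0 : V) + b.repr ⟨u, hu⟩ 1 • (b 1 : V) :=
    fun u hu => by
      have := congrArg Subtype.val (b.sum_repr ⟨u, hu⟩)
      rw [Fin.sum_univ_two] at this
      exact this.symm
  rw [expand v hv, expand w hw, wedge_smul_add_smul]
  exact Submodule.smul_mem _ _ (Submodule.mem_span_singleton_self _)

/-- The coordinate of `⋀²V = ⋀²W₁ ⊕ (W₁ ⊗ W₂) ⊕ ⋀²W₂` along `⋀²W₁`, normalised by `b`. -/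
noncomputable def wedgeCoord {W₁ W₂ : Submodule k V} (h : IsCompl W₁ W₂)
    (b : Basis (Fin 2) k W₁) : ⋀[k]^2 V →ₗ[k] k :=
  exteriorPower.alternatingMapLinearEquiv (b.det.compLinearMap (W₁.projectionOnto W₂ h))

section
variable {W₁ W₂ : Submodule k V} (h : IsCompl W₁ W₂) (b : Basis (Fin 2) k W₁)

lemma wedgeCoord_wedge (v w : V) :
    wedgeCoord h b (wedge v w) =
      b.det ![W₁.projectionOnto W₂ h v, W₁.projectionOnto W₂ h w] := by
  rw [wedgeCoord, wedge_eq_ιMulti, exteriorPower.alternatingMapLinearEquiv_apply_ιMulti,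
    AlternatingMap.compLinearMap_apply]
  congr 1
  ext i; fin_cases i <;> rfl

lemma wedgeCoord_wedge_basis : wedgeCoord h b (wedge (b 0 : V) (b 1)) = 1 := by
  rw [wedgeCoord_wedge, Submodule.projectionOnto_apply_left,
    Submodule.projectionOnto_apply_left, ← b.det_self]
  congr 1
  ext i; fin_cases i <;> rfl

lemma wedgeCoord_wedge_of_mem_right {v : V} (hv : v ∈ W₂) (w : V) :
    wedgeCoord h b (wedge v w) = 0 := by
  rw [wedgeCoord_wedge, Submodule.projectionOnto_apply_of_mem_right h hv]
  exact b.det.map_coord_zero 0 rfl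

end

lemma linearIndependent_wedge_basis_of_isCompl {W₁ W₂ : Submodule k V} (h : IsCompl W₁ W₂)
    (b₁ : Basis (Fin 2) k W₁) (b₂ : Basis (Fin 2) k W₂) :
    LinearIndependent k ![(wedge (b₁ 0 : V) (b₁ 1) : ⋀[k]^2 V), wedge (b₂ 0 : V) (b₂ 1)] := by
  rw [LinearIndependent.pair_iff]
  intro s t hst
  have h₁ := congrArg (wedgeCoord h b₁) hst
  have h₂ := congrArg (wedgeCoord h.symm b₂) hst
  simp only [map_add, map_smul, map_zero, wedgeCoord_wedge_basis,
    wedgeCoord_wedge_of_mem_right h b₁ (b₂ 0).2, wedgeCoord_wedge_of_mem_right h.symm b₂ (b₁ 0).2,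
    smul_eq_mul, mul_one, mul_zero, add_zero, zero_add] at h₁ h₂
  exact ⟨h₁, h₂⟩

end Wedge

lemma Module.End.isCompl_eigenspace_one_neg_one {k : Type*} [Field k] {V : Type*} [AddCommGroup V]
    [Module k V] (h2 : (2 : k) ≠ 0) {S : End k V} (hS : ∀ v, S (S v) = v) :
    IsCompl (S.eigenspace 1) (S.eigenspace (-1)) := by
  refine ⟨S.disjoint_genEigenspace (fun h => h2 ?_) 1 1, codisjoint_iff.mpr (eq_top_iff.mpr ?_)⟩
  · linear_combination h
  intro v _
  refine Submodule.mem_sup.mpr ⟨(2 : k)⁻¹ • (v + S v), ?_, (2 : k)⁻¹ • (v - S v), ?_, ?_⟩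
  · rw [End.mem_eigenspace_iff, map_smul, map_add, hS, add_comm, one_smul]
  · rw [End.mem_eigenspace_iff, map_smul, map_sub, hS, smul_comm, neg_one_smul, neg_sub]
  · rw [← smul_add, add_add_sub_cancel, ← two_smul k, smul_smul, inv_mul_cancel₀ h2, one_smul]

namespace MonoidHom

variable {k : Type*} [Field k] {G : Type*} [Group G] (χ : G →* kˣ)

lemma val_eq_one_or_neg_one_of_mul_self (hχ2 : ∀ g, χ g * χ g = 1) (g : G) :
    (χ g : k) = 1 ∨ (χ g : k) = -1 :=
  mul_self_eq_one_iff.mp (by rw [← Units.val_mul, hχ2, Units.val_one])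

lemma exists_val_eq_neg_one (hχ1 : χ ≠ 1) (hχ2 : ∀ g, χ g * χ g = 1) :
    ∃ g, (χ g : k) = -1 := by
  by_contra! h
  exact hχ1 (ext fun g => Units.ext
    ((χ.val_eq_one_or_neg_one_of_mul_self hχ2 g).resolve_right (h g)))

lemma index_ker_eq_two (hχ1 : χ ≠ 1) (hχ2 : ∀ g, χ g * χ g = 1) : χ.ker.index = 2 := by
  obtain ⟨a, ha⟩ := χ.exists_val_eq_neg_one hχ1 hχ2
  have hne : (-1 : k) ≠ 1 := fun h => hχ1 <| ext fun b => Units.ext <| by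
    rcases χ.val_eq_one_or_neg_one_of_mul_self hχ2 b with hb | hb <;> simp [hb, h]
  have mem_ker_iff : ∀ b, b ∈ χ.ker ↔ (χ b : k) = 1 := fun b => by
    rw [mem_ker, Units.val_eq_one]
  refine Subgroup.index_eq_two_iff.mpr ⟨a, fun b => ?_⟩
  rw [mem_ker_iff, mem_ker_iff, map_mul, Units.val_mul, ha]
  rcases χ.val_eq_one_or_neg_one_of_mul_self hχ2 b with hb | hb <;> simp [hb, hne]

end MonoidHom

namespace Representation

variable {k : Type*} [Field k] {V : Type*} [AddCommGroup V] [Module k V]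
  {G : Type*} [Group G] (σ : Representation k G V)

lemma exists_eq_smul_of_commute [IsAlgClosed k] [FiniteDimensional k V] [Nontrivial V]
    (hirr : ∀ W : Submodule k V, (∀ g : G, ∀ v ∈ W, σ g v ∈ W) → W = ⊥ ∨ W = ⊤)
    {A : End k V} (hA : ∀ g v, A (σ g v) = σ g (A v)) : ∃ c : k, ∀ v, A v = c • v := by
  obtain ⟨c, hc⟩ := End.exists_eigenvalue A
  have htop : A.eigenspace c = ⊤ := (hirr _ fun g v hv => by
    rw [End.mem_eigenspace_iff] at hv ⊢
    rw [hA, hv, map_smul]).resolve_left hc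
  exact ⟨c, fun v => End.mem_eigenspace_iff.mp (htop ▸ Submodule.mem_top)⟩

lemma exists_involution_of_self_twist [IsAlgClosed k] [FiniteDimensional k V] [Nontrivial V]
    (hirr : ∀ W : Submodule k V, (∀ g : G, ∀ v ∈ W, σ g v ∈ W) → W = ⊥ ∨ W = ⊤)
    (χ : G →* kˣ) (hχ2 : ∀ g, χ g * χ g = 1)
    (T : V ≃ₗ[k] V) (hT : ∀ g v, T ((χ g : k) • σ g v) = σ g (T v)) :
    ∃ S : End k V, (∀ v, S (S v) = v) ∧ ∀ g v, S (σ g v) = (χ g : k) • σ g (S v) := by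
  have hχ2' : ∀ g, (χ g : k) * χ g = 1 := fun g => by rw [← Units.val_mul, hχ2, Units.val_one]
  have hTσ : ∀ g v, T (σ g v) = (χ g : k) • σ g (T v) := fun g v => by
    rw [← hT, map_smul, smul_smul, hχ2', one_smul]
  obtain ⟨c, hc⟩ := σ.exists_eq_smul_of_commute hirr (A := T.toLinearMap ∘ₗ T.toLinearMap)
    fun g v => by simp [hTσ, smul_smul, hχ2']
  obtain ⟨l, rfl⟩ := IsAlgClosed.exists_eq_mul_self c
  have hl : l ≠ 0 := by
    rintro rfl
    obtain ⟨v, hv⟩ := exists_ne (0 : V)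
    exact hv (T.injective (T.injective (by simpa using hc v)))
  refine ⟨l⁻¹ • T.toLinearMap, fun v => ?_, fun g v => ?_⟩
  · have := hc v
    simp only [LinearMap.coe_comp, LinearEquiv.coe_coe, Function.comp_apply] at this
    simp [this, smul_smul, hl]
  · simp [hTσ, smul_comm (χ g : k)]

lemma finrank_le_finrank_of_mapsTo [FiniteDimensional k V] (g : G) {W W' : Submodule k V}
    (h : ∀ v ∈ W, σ g v ∈ W') : finrank k W ≤ finrank k W' :=
  LinearMap.finrank_le_finrank_of_injective (f := (σ g).restrict h) fun _ _ hxy =>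
    Subtype.ext ((σ.apply_bijective g).injective (congrArg Subtype.val hxy))

noncomputable def translatesWedgeSpan (W : Submodule k V) : Submodule k (⋀[k]^2 V) :=
  Submodule.span k {x | ∃ g : G, ∃ v ∈ W, ∃ w ∈ W, x = exMap (σ g) (wedge v w)}

lemma exMap_mem_translatesWedgeSpan {W : Submodule k V} {x : ⋀[k]^2 V}
    (hx : x ∈ σ.translatesWedgeSpan W) (g : G) : exMap (σ g) x ∈ σ.translatesWedgeSpan W := by
  have : σ.translatesWedgeSpan W ≤ (σ.translatesWedgeSpan W).comap (exMap (σ g)) := by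
    refine Submodule.span_le.mpr ?_
    rintro _ ⟨g', v, hv, w, hw, rfl⟩
    exact Submodule.subset_span ⟨g * g', v, hv, w, hw, by rw [map_mul, exMap_mul]; rfl⟩
  exact this hx

section Twisted

variable {σ} (χ : G →* kˣ) {S : End k V} (hS : ∀ g v, S (σ g v) = (χ g : k) • σ g (S v))
include hS

lemma apply_mem_eigenspace_of_twisted {μ : k} {v : V} (hv : v ∈ S.eigenspace μ) (g : G) :
    σ g v ∈ S.eigenspace ((χ g : k) * μ) := by
  rw [End.mem_eigenspace_iff] at hv ⊢
  rw [hS, hv, map_smul, smul_smul]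

lemma apply_mem_eigenspace_of_mem_ker {μ : k} {v : V} (hv : v ∈ S.eigenspace μ) {h : G}
    (hh : h ∈ χ.ker) : σ h v ∈ S.eigenspace μ := by
  simpa [MonoidHom.mem_ker.mp hh] using apply_mem_eigenspace_of_twisted χ hS hv h

lemma apply_inv_mem_eigenspace_one {g : G} (hg : (χ g : k) = -1) :
    ∀ v ∈ S.eigenspace (-1), σ g⁻¹ v ∈ S.eigenspace 1 := fun v hv => by
  have hv' := apply_mem_eigenspace_of_twisted χ hS hv g⁻¹
  rwa [map_inv, Units.val_inv_eq_inv_val, hg, inv_neg, inv_one, neg_one_mul, neg_neg] at hv'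

lemma finrank_eigenspace_one_eq_neg_one [FiniteDimensional k V] {g₀ : G}
    (hg₀ : (χ g₀ : k) = -1) : finrank k (S.eigenspace 1) = finrank k (S.eigenspace (-1)) := by
  refine le_antisymm (σ.finrank_le_finrank_of_mapsTo g₀ fun v hv => ?_)
    (σ.finrank_le_finrank_of_mapsTo g₀⁻¹ (apply_inv_mem_eigenspace_one χ hS hg₀))
  simpa [hg₀] using apply_mem_eigenspace_of_twisted χ hS hv g₀

lemma translatesWedgeSpan_eigenspace_one_eq (hχ2 : ∀ g, χ g * χ g = 1) {g₀ : G}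
    (hg₀ : (χ g₀ : k) = -1) (b₁ : Basis (Fin 2) k (S.eigenspace 1))
    (b₂ : Basis (Fin 2) k (S.eigenspace (-1))) :
    σ.translatesWedgeSpan (S.eigenspace 1) =
      Submodule.span k
        (Set.range ![(wedge (b₁ 0 : V) (b₁ 1) : ⋀[k]^2 V), wedge (b₂ 0 : V) (b₂ 1)]) := by
  refine le_antisymm (Submodule.span_le.mpr ?_) (Submodule.span_le.mpr ?_)
  · rintro _ ⟨g, v, hv, w, hw, rfl⟩
    rw [exMap_wedge]
    have hv' := apply_mem_eigenspace_of_twisted χ hS hv g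
    have hw' := apply_mem_eigenspace_of_twisted χ hS hw g
    rcases χ.val_eq_one_or_neg_one_of_mul_self hχ2 g with hg | hg <;>
      rw [hg, mul_one] at hv' hw'
    · exact Submodule.span_mono (Set.singleton_subset_iff.mpr (Set.mem_range_self 0))
        (wedge_mem_span_wedge_basis b₁ hv' hw')
    · exact Submodule.span_mono (Set.singleton_subset_iff.mpr (Set.mem_range_self 1))
        (wedge_mem_span_wedge_basis b₂ hv' hw')
  · have swap := apply_inv_mem_eigenspace_one χ hS hg₀
    rintro _ ⟨i, rfl⟩
    fin_cases i
    · exact Submodule.subset_span ⟨1, _, (b₁ 0).2, _, (b₁ 1).2, by simp [exMap_wedge]⟩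
    · refine Submodule.subset_span ⟨g₀, _, swap _ (b₂ 0).2, _, swap _ (b₂ 1).2, ?_⟩
      simp [exMap_wedge]

end Twisted

end Representation

/-- If an irreducible `4`-dimensional representation `σ` of `G` has a
nontrivial quadratic self-twist by `χ` with kernel `H` (of index two), then `σ|_H` splits as a
direct sum of two `2`-dimensional subrepresentations `W₁ ⊕ W₂`, and the `G`-translates of
`⋀²W₁` span a `G`-invariant `2`-dimensional subspace of `⋀²V`. -/
theorem quadratic_self_twist_clifford_decomposition
    {k : Type*} [Field k] [IsAlgClosed k] (h2 : (2 : k) ≠ 0)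
    {V : Type*} [AddCommGroup V] [Module k V] [FiniteDimensional k V]
    (hV : Module.finrank k V = 4)
    {G : Type*} [Group G] (σ : Representation k G V)
    (hirr : ∀ W : Submodule k V, (∀ g : G, ∀ v ∈ W, σ g v ∈ W) → W = ⊥ ∨ W = ⊤)
    (χ : G →* kˣ) (hχ1 : χ ≠ 1) (hχ2 : ∀ g : G, χ g * χ g = 1)
    (T : V ≃ₗ[k] V) (hT : ∀ (g : G) (v : V), T ((χ g : k) • σ g v) = σ g (T v)) :
    χ.ker.index = 2 ∧
    ∃ W₁ W₂ : Submodule k V, IsCompl W₁ W₂ ∧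
      Module.finrank k W₁ = 2 ∧ Module.finrank k W₂ = 2 ∧
      (∀ h ∈ χ.ker, ∀ v ∈ W₁, σ h v ∈ W₁) ∧
      (∀ h ∈ χ.ker, ∀ v ∈ W₂, σ h v ∈ W₂) ∧
      (Module.finrank k
        (Submodule.span k {x : ⋀[k]^2 V |
          ∃ g : G, ∃ v ∈ W₁, ∃ w ∈ W₁, x = exMap (σ g) (wedge v w)}) = 2 ∧
       ∀ g : G, ∀ x ∈ Submodule.span k {x : ⋀[k]^2 V |
          ∃ g' : G, ∃ v ∈ W₁, ∃ w ∈ W₁, x = exMap (σ g') (wedge v w)},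
         exMap (σ g) x ∈ Submodule.span k {x : ⋀[k]^2 V |
          ∃ g' : G, ∃ v ∈ W₁, ∃ w ∈ W₁, x = exMap (σ g') (wedge v w)}) := by
  have : Nontrivial V := Module.nontrivial_of_finrank_pos (R := k) (by omega)
  obtain ⟨S, hSS, hS⟩ := σ.exists_involution_of_self_twist hirr χ hχ2 T hT
  obtain ⟨g₀, hg₀⟩ := χ.exists_val_eq_neg_one hχ1 hχ2
  have hcompl := End.isCompl_eigenspace_one_neg_one h2 hSS
  have hdim : finrank k (S.eigenspace 1) = 2 ∧ finrank k (S.eigenspace (-1)) = 2 := by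
    have hsum := Submodule.finrank_add_eq_of_isCompl hcompl
    have heq := Representation.finrank_eigenspace_one_eq_neg_one χ hS hg₀
    omega
  let b₁ := Module.finBasisOfFinrankEq k _ hdim.1
  let b₂ := Module.finBasisOfFinrankEq k _ hdim.2
  refine ⟨χ.index_ker_eq_two hχ1 hχ2, _, _, hcompl, hdim.1, hdim.2,
    fun h hh v hv => Representation.apply_mem_eigenspace_of_mem_ker χ hS hv hh,
    fun h hh v hv => Representation.apply_mem_eigenspace_of_mem_ker χ hS hv hh, ?_,
    fun g x hx => σ.exMap_mem_translatesWedgeSpan hx g⟩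
  change finrank k (σ.translatesWedgeSpan _) = 2
  rw [Representation.translatesWedgeSpan_eigenspace_one_eq χ hS hχ2 hg₀ b₁ b₂,
    finrank_span_eq_card (linearIndependent_wedge_basis_of_isCompl hcompl b₁ b₂), Fintype.card_fin]
end

section
/- Let $G_{192}$ be the subgroup of $\mathrm{GL}(4,\mathbb{C})$ generated by the matrices $a = \mathrm{diag}(-1,-1,1,1)$, $b = \mathrm{diag}(-1,1,-1,1)$, $c$, and $d$, where $c$ has rows $(0,0,-1,0),(0,0,0,1),(-i,0,0,0),(0,-i,0,0)$ and $d$ has rows $(0,-1,0,0),(0,0,-1,0),(1,0,0,0),(0,0,0,1)$. Then the inclusion representation $\rho$ of $G_{192}$ on $\mathbb{C}^4$ is irreducible. -/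
open Complex

/-- The matrix `a` of Martin's group `G₁₉₂`. -/
def aMat : Matrix (Fin 4) (Fin 4) ℂ :=
  !![-1, 0, 0, 0; 0, -1, 0, 0; 0, 0, 1, 0; 0, 0, 0, 1]

/-- The matrix `b` of Martin's group `G₁₉₂`. -/
def bMat : Matrix (Fin 4) (Fin 4) ℂ :=
  !![-1, 0, 0, 0; 0, 1, 0, 0; 0, 0, -1, 0; 0, 0, 0, 1]

/-- The matrix `c` of Martin's group `G₁₉₂`. -/
def cMat : Matrix (Fin 4) (Fin 4) ℂ :=
  !![0, 0, -1, 0; 0, 0, 0, 1; -I, 0, 0, 0; 0, -I, 0, 0]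

/-- The matrix `d` of Martin's group `G₁₉₂`. -/
def dMat : Matrix (Fin 4) (Fin 4) ℂ :=
  !![0, -1, 0, 0; 0, 0, -1, 0; 1, 0, 0, 0; 0, 0, 0, 1]

private lemma amul (u : Fin 4 → ℂ) : aMat.mulVec u = ![-u 0, -u 1, u 2, u 3] := by
  funext i
  fin_cases i <;> simp [aMat, Matrix.mulVec, dotProduct, Fin.sum_univ_four]

private lemma bmul (u : Fin 4 → ℂ) : bMat.mulVec u = ![-u 0, u 1, -u 2, u 3] := by
  funext i
  fin_cases i <;> simp [bMat, Matrix.mulVec, dotProduct, Fin.sum_univ_four]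

private lemma cmul (u : Fin 4 → ℂ) : cMat.mulVec u = ![-u 2, u 3, -I * u 0, -I * u 1] := by
  funext i
  fin_cases i <;> simp [cMat, Matrix.mulVec, dotProduct, Fin.sum_univ_four]

private lemma dmul (u : Fin 4 → ℂ) : dMat.mulVec u = ![-u 1, -u 2, u 0, u 3] := by
  funext i
  fin_cases i <;> simp [dMat, Matrix.mulVec, dotProduct, Fin.sum_univ_four]

/-- The inclusion representation of the group `G₁₉₂ ≤ GL(4, ℂ)` generated by
the matrices `a, b, c, d` on `ℂ⁴` is irreducible: the only subspaces of `ℂ⁴` invariant under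
`a`, `b`, `c` and `d` are `0` and `ℂ⁴`. -/
theorem G192_inclusion_irreducible
    (W : Submodule ℂ (Fin 4 → ℂ))
    (hW : ∀ M ∈ ({aMat, bMat, cMat, dMat} : Set (Matrix (Fin 4) (Fin 4) ℂ)),
      ∀ v ∈ W, M.mulVec v ∈ W) :
    W = ⊥ ∨ W = ⊤ := by
  by_cases hbot : W = ⊥
  · exact Or.inl hbot
  right
  have ha : ∀ u ∈ W, (![-u 0, -u 1, u 2, u 3] : Fin 4 → ℂ) ∈ W := fun u hu => by
    rw [← amul]; exact hW aMat (by simp) u hu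
  have hb : ∀ u ∈ W, (![-u 0, u 1, -u 2, u 3] : Fin 4 → ℂ) ∈ W := fun u hu => by
    rw [← bmul]; exact hW bMat (by simp) u hu
  have hc : ∀ u ∈ W, (![-u 2, u 3, -I * u 0, -I * u 1] : Fin 4 → ℂ) ∈ W := fun u hu => by
    rw [← cmul]; exact hW cMat (by simp) u hu
  have hd : ∀ u ∈ W, (![-u 1, -u 2, u 0, u 3] : Fin 4 → ℂ) ∈ W := fun u hu => by
    rw [← dmul]; exact hW dMat (by simp) u hu
  have hab : ∀ u ∈ W, (![u 0, -u 1, -u 2, u 3] : Fin 4 → ℂ) ∈ W := by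
    intro u hu
    simpa using ha _ (hb u hu)
  have proj0 : ∀ u ∈ W, (![u 0, 0, 0, 0] : Fin 4 → ℂ) ∈ W := by
    intro u hu
    have key : (![u 0, 0, 0, 0] : Fin 4 → ℂ) =
        (4⁻¹ : ℂ) • (u - ![-u 0, -u 1, u 2, u 3] - ![-u 0, u 1, -u 2, u 3]
          + ![u 0, -u 1, -u 2, u 3]) := by
      funext i
      fin_cases i <;> simp [Matrix.vecHead, Matrix.vecTail, show Fin.succ 2 = (3 : Fin 4) from rfl] <;> ring
    rw [key]
    exact W.smul_mem _ (W.add_mem (W.sub_mem (W.sub_mem hu (ha u hu)) (hb u hu)) (hab u hu))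
  have proj1 : ∀ u ∈ W, (![0, u 1, 0, 0] : Fin 4 → ℂ) ∈ W := by
    intro u hu
    have key : (![0, u 1, 0, 0] : Fin 4 → ℂ) =
        (4⁻¹ : ℂ) • (u - ![-u 0, -u 1, u 2, u 3] + ![-u 0, u 1, -u 2, u 3]
          - ![u 0, -u 1, -u 2, u 3]) := by
      funext i
      fin_cases i <;> simp [Matrix.vecHead, Matrix.vecTail, show Fin.succ 2 = (3 : Fin 4) from rfl] <;> ring
    rw [key]
    exact W.smul_mem _ (W.sub_mem (W.add_mem (W.sub_mem hu (ha u hu)) (hb u hu)) (hab u hu))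
  have proj2 : ∀ u ∈ W, (![0, 0, u 2, 0] : Fin 4 → ℂ) ∈ W := by
    intro u hu
    have key : (![0, 0, u 2, 0] : Fin 4 → ℂ) =
        (4⁻¹ : ℂ) • (u + ![-u 0, -u 1, u 2, u 3] - ![-u 0, u 1, -u 2, u 3]
          - ![u 0, -u 1, -u 2, u 3]) := by
      funext i
      fin_cases i <;> simp [Matrix.vecHead, Matrix.vecTail, show Fin.succ 2 = (3 : Fin 4) from rfl] <;> ring
    rw [key]
    exact W.smul_mem _ (W.sub_mem (W.sub_mem (W.add_mem hu (ha u hu)) (hb u hu)) (hab u hu))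
  have proj3 : ∀ u ∈ W, (![0, 0, 0, u 3] : Fin 4 → ℂ) ∈ W := by
    intro u hu
    have key : (![0, 0, 0, u 3] : Fin 4 → ℂ) =
        (4⁻¹ : ℂ) • (u + ![-u 0, -u 1, u 2, u 3] + ![-u 0, u 1, -u 2, u 3]
          + ![u 0, -u 1, -u 2, u 3]) := by
      funext i
      fin_cases i <;> simp [Matrix.vecHead, Matrix.vecTail, show Fin.succ 2 = (3 : Fin 4) from rfl] <;> ring
    rw [key]
    exact W.smul_mem _ (W.add_mem (W.add_mem (W.add_mem hu (ha u hu)) (hb u hu)) (hab u hu))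
  -- moving between basis vectors using c and d
  have step02 : (![1, 0, 0, 0] : Fin 4 → ℂ) ∈ W → (![0, 0, 1, 0] : Fin 4 → ℂ) ∈ W := by
    intro h
    simpa using hd _ h
  have step21 : (![0, 0, 1, 0] : Fin 4 → ℂ) ∈ W → (![0, 1, 0, 0] : Fin 4 → ℂ) ∈ W := by
    intro h
    have h3 : (![(0:ℂ), -1, 0, 0] : Fin 4 → ℂ) ∈ W := by simpa using hd _ h
    have key : (![0, 1, 0, 0] : Fin 4 → ℂ) = (-1 : ℂ) • ![(0:ℂ), -1, 0, 0] := by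
      funext i; fin_cases i <;> simp
    rw [key]
    exact W.smul_mem _ h3
  have step31 : (![0, 0, 0, 1] : Fin 4 → ℂ) ∈ W → (![0, 1, 0, 0] : Fin 4 → ℂ) ∈ W := by
    intro h
    simpa using hc _ h
  have step13 : (![0, 1, 0, 0] : Fin 4 → ℂ) ∈ W → (![0, 0, 0, 1] : Fin 4 → ℂ) ∈ W := by
    intro h
    have h3 : (![(0:ℂ), 0, 0, -I] : Fin 4 → ℂ) ∈ W := by simpa using hc _ h
    have key : (![0, 0, 0, 1] : Fin 4 → ℂ) = I • ![(0:ℂ), 0, 0, -I] := by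
      funext i
      fin_cases i <;> simp [Complex.I_mul_I]
    rw [key]
    exact W.smul_mem _ h3
  have step10 : (![0, 1, 0, 0] : Fin 4 → ℂ) ∈ W → (![1, 0, 0, 0] : Fin 4 → ℂ) ∈ W := by
    intro h
    have h3 : (![(-1:ℂ), 0, 0, 0] : Fin 4 → ℂ) ∈ W := by simpa using hd _ h
    have key : (![1, 0, 0, 0] : Fin 4 → ℂ) = (-1 : ℂ) • ![(-1:ℂ), 0, 0, 0] := by
      funext i; fin_cases i <;> simp
    rw [key]
    exact W.smul_mem _ h3
  -- from a nonzero vector in W, get e1 ∈ W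
  obtain ⟨v, hv, hv0⟩ := Submodule.exists_mem_ne_zero_of_ne_bot hbot
  obtain ⟨j, hj⟩ := Function.ne_iff.mp hv0
  simp only [Pi.zero_apply] at hj
  have he1 : (![0, 1, 0, 0] : Fin 4 → ℂ) ∈ W := by
    fin_cases j
    · have h := proj0 v hv
      have h' : (![1, 0, 0, 0] : Fin 4 → ℂ) ∈ W := by
        have key : (![1, 0, 0, 0] : Fin 4 → ℂ) = (v 0)⁻¹ • ![v 0, 0, 0, 0] := by
          funext i
          fin_cases i <;> simp
          exact (inv_mul_cancel₀ hj).symm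
        rw [key]; exact W.smul_mem _ h
      exact step21 (step02 h')
    · have h := proj1 v hv
      have key : (![0, 1, 0, 0] : Fin 4 → ℂ) = (v 1)⁻¹ • ![0, v 1, 0, 0] := by
        funext i
        fin_cases i <;> simp
        exact (inv_mul_cancel₀ hj).symm
      rw [key]; exact W.smul_mem _ h
    · have h := proj2 v hv
      have h' : (![0, 0, 1, 0] : Fin 4 → ℂ) ∈ W := by
        have key : (![0, 0, 1, 0] : Fin 4 → ℂ) = (v 2)⁻¹ • ![0, 0, v 2, 0] := by
          funext i
          fin_cases i <;> simp
          exact (inv_mul_cancel₀ hj).symm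
        rw [key]; exact W.smul_mem _ h
      exact step21 h'
    · have h := proj3 v hv
      have h' : (![0, 0, 0, 1] : Fin 4 → ℂ) ∈ W := by
        have key : (![0, 0, 0, 1] : Fin 4 → ℂ) = (v 3)⁻¹ • ![0, 0, 0, v 3] := by
          funext i
          fin_cases i <;> simp
          exact (inv_mul_cancel₀ hj).symm
        rw [key]; exact W.smul_mem _ h
      exact step31 h'
  have he0 := step10 he1
  have he2 := step02 he0
  have he3 := step13 he1
  rw [eq_top_iff]
  intro u _
  have hrep : u = u 0 • ![1, 0, 0, 0] + u 1 • ![0, 1, 0, 0]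
      + u 2 • ![0, 0, 1, 0] + u 3 • ![(0:ℂ), 0, 0, 1] := by
    funext i
    fin_cases i <;> simp [Matrix.vecHead, Matrix.vecTail, show Fin.succ 2 = (3 : Fin 4) from rfl]
  rw [hrep]
  exact W.add_mem (W.add_mem (W.add_mem (W.smul_mem _ he0) (W.smul_mem _ he1))
    (W.smul_mem _ he2)) (W.smul_mem _ he3)
end

section
/- With $G_{192} \le \mathrm{GL}(4,\mathbb{C})$ as above and $\rho$ the inclusion representation, the exterior square representation $\wedge^2\rho$ of $G_{192}$ on $\wedge^2\mathbb{C}^4 \cong \mathbb{C}^6$ is irreducible. Equivalently, every $6 \times 6$ complex matrix commuting with $\wedge^2 a$, $\wedge^2 b$, $\wedge^2 c$, and $\wedge^2 d$ is scalar. -/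
open Complex

/-- The ordered list of index pairs `(i, j)`, `i < j`, corresponding to the basis
`e₁∧e₂, e₁∧e₃, e₁∧e₄, e₂∧e₃, e₂∧e₄, e₃∧e₄` of `⋀²ℂ⁴`. -/
def pairs6 : Fin 6 → Fin 4 × Fin 4 :=
  ![(0, 1), (0, 2), (0, 3), (1, 2), (1, 3), (2, 3)]

/-- The second exterior power (second compound matrix) of a `4 × 4` complex matrix, expressed
in the basis `e₁∧e₂, e₁∧e₃, e₁∧e₄, e₂∧e₃, e₂∧e₄, e₃∧e₄`. -/
def wedge2 (M : Matrix (Fin 4) (Fin 4) ℂ) : Matrix (Fin 6) (Fin 6) ℂ :=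
  fun p q =>
    M (pairs6 p).1 (pairs6 q).1 * M (pairs6 p).2 (pairs6 q).2 -
      M (pairs6 p).1 (pairs6 q).2 * M (pairs6 p).2 (pairs6 q).1

namespace G192aux

lemma sA : Fin.succ (2 : Fin 3) = 3 := rfl
lemma sB : Fin.succ (2 : Fin 4) = 3 := rfl
lemma sC : Fin.succ (2 : Fin 5) = 3 := rfl
lemma sD : Fin.succ (3 : Fin 4) = 4 := rfl
lemma sE : Fin.succ (3 : Fin 5) = 4 := rfl
lemma sF : Fin.succ (4 : Fin 5) = 5 := rfl

lemma cons_val_five' {α : Type*} (a b c d e f : α) : (![a,b,c,d,e,f] : Fin 6 → α) 5 = f := rfl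
lemma pairs6_0 : pairs6 0 = (0, 1) := rfl
lemma pairs6_1 : pairs6 1 = (0, 2) := rfl
lemma pairs6_2 : pairs6 2 = (0, 3) := rfl
lemma pairs6_3 : pairs6 3 = (1, 2) := rfl
lemma pairs6_4 : pairs6 4 = (1, 3) := rfl
lemma pairs6_5 : pairs6 5 = (2, 3) := rfl

lemma mvA (v : Fin 6 → ℂ) :
    (wedge2 aMat).mulVec v = ![v 0, -v 1, -v 2, -v 3, -v 4, v 5] := by
  funext j
  fin_cases j <;>
    simp [wedge2, pairs6_0, pairs6_1, pairs6_2, pairs6_3, pairs6_4, pairs6_5, aMat,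
      Matrix.mulVec, dotProduct, Fin.sum_univ_six, cons_val_five']

lemma mvB (v : Fin 6 → ℂ) :
    (wedge2 bMat).mulVec v = ![-v 0, v 1, -v 2, -v 3, v 4, -v 5] := by
  funext j
  fin_cases j <;>
    simp [wedge2, pairs6_0, pairs6_1, pairs6_2, pairs6_3, pairs6_4, pairs6_5, bMat,
      Matrix.mulVec, dotProduct, Fin.sum_univ_six, cons_val_five']

lemma mvC (v : Fin 6 → ℂ) :
    (wedge2 cMat).mulVec v = ![-v 5, -I * v 1, -I * v 3, I * v 2, I * v 4, -v 0] := by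
  funext j
  fin_cases j <;>
    simp [wedge2, pairs6_0, pairs6_1, pairs6_2, pairs6_3, pairs6_4, pairs6_5, cMat,
      Matrix.mulVec, dotProduct, Fin.sum_univ_six, cons_val_five']

lemma mvD (v : Fin 6 → ℂ) :
    (wedge2 dMat).mulVec v = ![v 3, v 0, -v 4, v 1, -v 5, v 2] := by
  funext j
  fin_cases j <;>
    simp [wedge2, pairs6_0, pairs6_1, pairs6_2, pairs6_3, pairs6_4, pairs6_5, dMat,
      Matrix.mulVec, dotProduct, Fin.sum_univ_six, cons_val_five']

/-- splitting within the class `{1,4}` using `C`. -/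
lemma split14 {W : Submodule ℂ (Fin 6 → ℂ)}
    (hC : ∀ v ∈ W, (wedge2 cMat).mulVec v ∈ W)
    (x y : ℂ) (hu : (![0, x, 0, 0, y, 0] : Fin 6 → ℂ) ∈ W) :
    (![0, x, 0, 0, 0, 0] : Fin 6 → ℂ) ∈ W ∧ (![0, 0, 0, 0, y, 0] : Fin 6 → ℂ) ∈ W := by
  constructor
  · have e : (![0, x, 0, 0, 0, 0] : Fin 6 → ℂ) = (2:ℂ)⁻¹ •
        ((![0, x, 0, 0, y, 0] : Fin 6 → ℂ) +
          I • (wedge2 cMat).mulVec ![0, x, 0, 0, y, 0]) := by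
      rw [mvC]; funext j
      fin_cases j <;> simp [Matrix.vecHead, Matrix.vecTail, sA, sB, sC, sD, sE, sF, cons_val_five'] <;> ring_nf <;>
        simp [Complex.I_sq] <;> ring_nf
    rw [e]; exact W.smul_mem _ (W.add_mem hu (W.smul_mem _ (hC _ hu)))
  · have e : (![0, 0, 0, 0, y, 0] : Fin 6 → ℂ) = (2:ℂ)⁻¹ •
        ((![0, x, 0, 0, y, 0] : Fin 6 → ℂ) +
          (-I) • (wedge2 cMat).mulVec ![0, x, 0, 0, y, 0]) := by
      rw [mvC]; funext j
      fin_cases j <;> simp [Matrix.vecHead, Matrix.vecTail, sA, sB, sC, sD, sE, sF, cons_val_five'] <;> ring_nf <;>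
        simp [Complex.I_sq] <;> ring_nf
    rw [e]; exact W.smul_mem _ (W.add_mem hu (W.smul_mem _ (hC _ hu)))

/-- moving a multiple of `e₄` to a multiple of `e₁` using `D, C, D, D`. -/
lemma e4toe1 {W : Submodule ℂ (Fin 6 → ℂ)}
    (hC : ∀ v ∈ W, (wedge2 cMat).mulVec v ∈ W)
    (hD : ∀ v ∈ W, (wedge2 dMat).mulVec v ∈ W)
    (t : ℂ) (h : (![0, 0, 0, 0, t, 0] : Fin 6 → ℂ) ∈ W) :
    (![0, -I * t, 0, 0, 0, 0] : Fin 6 → ℂ) ∈ W := by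
  have h1 : (![0, 0, -t, 0, 0, 0] : Fin 6 → ℂ) ∈ W := by
    have e : (![0, 0, -t, 0, 0, 0] : Fin 6 → ℂ)
        = (wedge2 dMat).mulVec ![0, 0, 0, 0, t, 0] := by
      rw [mvD]; funext j; fin_cases j <;> simp [Matrix.vecHead, Matrix.vecTail, sA, sB, sC, sD, sE, sF, cons_val_five']
    rw [e]; exact hD _ h
  have h2 : (![0, 0, 0, -I * t, 0, 0] : Fin 6 → ℂ) ∈ W := by
    have e : (![0, 0, 0, -I * t, 0, 0] : Fin 6 → ℂ)
        = (wedge2 cMat).mulVec ![0, 0, -t, 0, 0, 0] := by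
      rw [mvC]; funext j; fin_cases j <;> simp [Matrix.vecHead, Matrix.vecTail, sA, sB, sC, sD, sE, sF, cons_val_five'] <;> ring
    rw [e]; exact hC _ h1
  have h3 : (![-I * t, 0, 0, 0, 0, 0] : Fin 6 → ℂ) ∈ W := by
    have e : (![-I * t, 0, 0, 0, 0, 0] : Fin 6 → ℂ)
        = (wedge2 dMat).mulVec ![0, 0, 0, -I * t, 0, 0] := by
      rw [mvD]; funext j; fin_cases j <;> simp [Matrix.vecHead, Matrix.vecTail, sA, sB, sC, sD, sE, sF, cons_val_five']
    rw [e]; exact hD _ h2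
  have e : (![0, -I * t, 0, 0, 0, 0] : Fin 6 → ℂ)
      = (wedge2 dMat).mulVec ![-I * t, 0, 0, 0, 0, 0] := by
    rw [mvD]; funext j; fin_cases j <;> simp [Matrix.vecHead, Matrix.vecTail, sA, sB, sC, sD, sE, sF, cons_val_five']
  rw [e]; exact hD _ h3

/-- From a nonzero multiple of `e₁` in `W`, `W = ⊤`. -/
lemma top_of_e1 {W : Submodule ℂ (Fin 6 → ℂ)}
    (hC : ∀ v ∈ W, (wedge2 cMat).mulVec v ∈ W)
    (hD : ∀ v ∈ W, (wedge2 dMat).mulVec v ∈ W)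
    (t : ℂ) (ht : t ≠ 0) (h : (![0, t, 0, 0, 0, 0] : Fin 6 → ℂ) ∈ W) : W = ⊤ := by
  have he1 : (![(0:ℂ), 1, 0, 0, 0, 0] : Fin 6 → ℂ) ∈ W := by
    have e : (![(0:ℂ), 1, 0, 0, 0, 0] : Fin 6 → ℂ) = t⁻¹ • ![0, t, 0, 0, 0, 0] := by
      funext j; fin_cases j <;> simp [Matrix.vecHead, Matrix.vecTail, sA, sB, sC, sD, sE, sF, cons_val_five', inv_mul_cancel₀ ht]
    rw [e]; exact W.smul_mem _ h
  have he3 : (![(0:ℂ), 0, 0, 1, 0, 0] : Fin 6 → ℂ) ∈ W := by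
    have e : (![(0:ℂ), 0, 0, 1, 0, 0] : Fin 6 → ℂ)
        = (wedge2 dMat).mulVec ![0, 1, 0, 0, 0, 0] := by
      rw [mvD]; funext j; fin_cases j <;> simp [Matrix.vecHead, Matrix.vecTail, sA, sB, sC, sD, sE, sF, cons_val_five']
    rw [e]; exact hD _ he1
  have he0 : (![(1:ℂ), 0, 0, 0, 0, 0] : Fin 6 → ℂ) ∈ W := by
    have e : (![(1:ℂ), 0, 0, 0, 0, 0] : Fin 6 → ℂ)
        = (wedge2 dMat).mulVec ![0, 0, 0, 1, 0, 0] := by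
      rw [mvD]; funext j; fin_cases j <;> simp [Matrix.vecHead, Matrix.vecTail, sA, sB, sC, sD, sE, sF, cons_val_five']
    rw [e]; exact hD _ he3
  have he5' : (![(0:ℂ), 0, 0, 0, 0, -1] : Fin 6 → ℂ) ∈ W := by
    have e : (![(0:ℂ), 0, 0, 0, 0, -1] : Fin 6 → ℂ)
        = (wedge2 cMat).mulVec ![1, 0, 0, 0, 0, 0] := by
      rw [mvC]; funext j; fin_cases j <;> simp [Matrix.vecHead, Matrix.vecTail, sA, sB, sC, sD, sE, sF, cons_val_five']
    rw [e]; exact hC _ he0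
  have he5 : (![(0:ℂ), 0, 0, 0, 0, 1] : Fin 6 → ℂ) ∈ W := by
    have e : (![(0:ℂ), 0, 0, 0, 0, 1] : Fin 6 → ℂ) = (-1:ℂ) • ![0, 0, 0, 0, 0, -1] := by
      funext j; fin_cases j <;> simp [Matrix.vecHead, Matrix.vecTail, sA, sB, sC, sD, sE, sF, cons_val_five']
    rw [e]; exact W.smul_mem _ he5'
  have he4 : (![(0:ℂ), 0, 0, 0, 1, 0] : Fin 6 → ℂ) ∈ W := by
    have e : (![(0:ℂ), 0, 0, 0, 1, 0] : Fin 6 → ℂ)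
        = (wedge2 dMat).mulVec ![0, 0, 0, 0, 0, -1] := by
      rw [mvD]; funext j; fin_cases j <;> simp [Matrix.vecHead, Matrix.vecTail, sA, sB, sC, sD, sE, sF, cons_val_five']
    rw [e]; exact hD _ he5'
  have he2 : (![(0:ℂ), 0, 1, 0, 0, 0] : Fin 6 → ℂ) ∈ W := by
    have e : (![(0:ℂ), 0, 1, 0, 0, 0] : Fin 6 → ℂ)
        = (-1:ℂ) • (wedge2 dMat).mulVec ![0, 0, 0, 0, 1, 0] := by
      rw [mvD]; funext j; fin_cases j <;> simp [Matrix.vecHead, Matrix.vecTail, sA, sB, sC, sD, sE, sF, cons_val_five']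
    rw [e]; exact W.smul_mem _ (hD _ he4)
  rw [eq_top_iff]
  intro w _
  have hw : w = w 0 • ![(1:ℂ),0,0,0,0,0] + w 1 • ![(0:ℂ),1,0,0,0,0] + w 2 • ![(0:ℂ),0,1,0,0,0]
      + w 3 • ![(0:ℂ),0,0,1,0,0] + w 4 • ![(0:ℂ),0,0,0,1,0] + w 5 • ![(0:ℂ),0,0,0,0,1] := by
    funext j; fin_cases j <;> simp [Matrix.vecHead, Matrix.vecTail, sA, sB, sC, sD, sE, sF, cons_val_five']
  rw [hw]
  exact W.add_mem (W.add_mem (W.add_mem (W.add_mem (W.add_mem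
    (W.smul_mem _ he0) (W.smul_mem _ he1)) (W.smul_mem _ he2))
    (W.smul_mem _ he3)) (W.smul_mem _ he4)) (W.smul_mem _ he5)

lemma part1 (W : Submodule ℂ (Fin 6 → ℂ))
    (hA : ∀ v ∈ W, (wedge2 aMat).mulVec v ∈ W)
    (hB : ∀ v ∈ W, (wedge2 bMat).mulVec v ∈ W)
    (hC : ∀ v ∈ W, (wedge2 cMat).mulVec v ∈ W)
    (hD : ∀ v ∈ W, (wedge2 dMat).mulVec v ∈ W) : W = ⊥ ∨ W = ⊤ := by
  rcases eq_or_ne W ⊥ with hbot | hbot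
  · exact Or.inl hbot
  right
  obtain ⟨v, hv, hvne⟩ := (Submodule.ne_bot_iff W).1 hbot
  have hex : ∃ k, v k ≠ 0 := by
    by_contra hcon
    push_neg at hcon
    exact hvne (funext fun j => hcon j)
  obtain ⟨k, hk⟩ := hex
  -- case `k ∈ {0, 5}` : project onto the pair `{0,5}` and push it into `{1,4}` with `D`.
  have case05 : ∀ _ : v 0 ≠ 0 ∨ v 5 ≠ 0, W = ⊤ := by
    intro hcase
    have hu : (![v 0, 0, 0, 0, 0, v 5] : Fin 6 → ℂ) ∈ W := by
      have e : (![v 0, 0, 0, 0, 0, v 5] : Fin 6 → ℂ)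
          = (2:ℂ)⁻¹ • (v + (wedge2 aMat).mulVec v) := by
        rw [mvA]; funext j; fin_cases j <;> simp [Matrix.vecHead, Matrix.vecTail, sA, sB, sC, sD, sE, sF, cons_val_five'] <;> ring
      rw [e]; exact W.smul_mem _ (W.add_mem hv (hA _ hv))
    have hDu : (![0, v 0, 0, 0, -v 5, 0] : Fin 6 → ℂ) ∈ W := by
      have e : (![0, v 0, 0, 0, -v 5, 0] : Fin 6 → ℂ)
          = (wedge2 dMat).mulVec ![v 0, 0, 0, 0, 0, v 5] := by
        rw [mvD]; funext j; fin_cases j <;> simp [Matrix.vecHead, Matrix.vecTail, sA, sB, sC, sD, sE, sF, cons_val_five']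
      rw [e]; exact hD _ hu
    obtain ⟨hx, hy⟩ := split14 hC (v 0) (-v 5) hDu
    rcases hcase with h0 | h5
    · exact top_of_e1 hC hD _ h0 hx
    · have := e4toe1 hC hD _ hy
      exact top_of_e1 hC hD _ (by simp [Complex.I_ne_zero, h5]) this
  have case14 : ∀ _ : v 1 ≠ 0 ∨ v 4 ≠ 0, W = ⊤ := by
    intro hcase
    have hu : (![0, v 1, 0, 0, v 4, 0] : Fin 6 → ℂ) ∈ W := by
      have e : (![0, v 1, 0, 0, v 4, 0] : Fin 6 → ℂ)
          = (2:ℂ)⁻¹ • (v + (wedge2 bMat).mulVec v) := by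
        rw [mvB]; funext j; fin_cases j <;> simp [Matrix.vecHead, Matrix.vecTail, sA, sB, sC, sD, sE, sF, cons_val_five'] <;> ring
      rw [e]; exact W.smul_mem _ (W.add_mem hv (hB _ hv))
    obtain ⟨hx, hy⟩ := split14 hC (v 1) (v 4) hu
    rcases hcase with h1 | h4
    · exact top_of_e1 hC hD _ h1 hx
    · have := e4toe1 hC hD _ hy
      exact top_of_e1 hC hD _ (by simp [Complex.I_ne_zero, h4]) this
  have case23 : ∀ _ : v 2 ≠ 0 ∨ v 3 ≠ 0, W = ⊤ := by
    intro hcase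
    have hu : (![0, 0, v 2, v 3, 0, 0] : Fin 6 → ℂ) ∈ W := by
      have e : (![0, 0, v 2, v 3, 0, 0] : Fin 6 → ℂ)
          = (4:ℂ)⁻¹ • (v - (wedge2 aMat).mulVec v - (wedge2 bMat).mulVec v
              + (wedge2 aMat).mulVec ((wedge2 bMat).mulVec v)) := by
        simp only [mvA, mvB]; funext j; fin_cases j <;> simp [Matrix.vecHead, Matrix.vecTail, sA, sB, sC, sD, sE, sF, cons_val_five'] <;> ring
      rw [e]
      exact W.smul_mem _ (W.add_mem (W.sub_mem (W.sub_mem hv (hA _ hv)) (hB _ hv))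
        (hA _ (hB _ hv)))
    have hw : (![0, v 3, 0, 0, -v 2, 0] : Fin 6 → ℂ) ∈ W := by
      have e : (![0, v 3, 0, 0, -v 2, 0] : Fin 6 → ℂ)
          = (wedge2 dMat).mulVec ((wedge2 dMat).mulVec ![0, 0, v 2, v 3, 0, 0]) := by
        simp only [mvD]; funext j; fin_cases j <;> simp [Matrix.vecHead, Matrix.vecTail, sA, sB, sC, sD, sE, sF, cons_val_five']
      rw [e]; exact hD _ (hD _ hu)
    obtain ⟨hx, hy⟩ := split14 hC (v 3) (-v 2) hw
    rcases hcase with h2 | h3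
    · have := e4toe1 hC hD _ hy
      exact top_of_e1 hC hD _ (by simp [Complex.I_ne_zero, h2]) this
    · exact top_of_e1 hC hD _ h3 hx
  fin_cases k
  · exact case05 (Or.inl hk)
  · exact case14 (Or.inl hk)
  · exact case23 (Or.inl hk)
  · exact case23 (Or.inr hk)
  · exact case14 (Or.inr hk)
  · exact case05 (Or.inr hk)

end G192aux

/-- The exterior square representation `⋀²ρ` of `G₁₉₂` on `⋀²ℂ⁴ ≅ ℂ⁶` is
irreducible; equivalently, every `6 × 6` complex matrix commuting with `⋀²a`, `⋀²b`, `⋀²c` and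
`⋀²d` is scalar. -/
theorem G192_exterior_square_irreducible :
    (∀ W : Submodule ℂ (Fin 6 → ℂ),
      (∀ M ∈ ({aMat, bMat, cMat, dMat} : Set (Matrix (Fin 4) (Fin 4) ℂ)),
        ∀ v ∈ W, (wedge2 M).mulVec v ∈ W) → W = ⊥ ∨ W = ⊤) ∧
    (∀ X : Matrix (Fin 6) (Fin 6) ℂ,
      (∀ M ∈ ({aMat, bMat, cMat, dMat} : Set (Matrix (Fin 4) (Fin 4) ℂ)),
        X * wedge2 M = wedge2 M * X) →
      ∃ s : ℂ, X = s • (1 : Matrix (Fin 6) (Fin 6) ℂ)) := by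
  have p1 : ∀ W : Submodule ℂ (Fin 6 → ℂ),
      (∀ M ∈ ({aMat, bMat, cMat, dMat} : Set (Matrix (Fin 4) (Fin 4) ℂ)),
        ∀ v ∈ W, (wedge2 M).mulVec v ∈ W) → W = ⊥ ∨ W = ⊤ := by
    intro W h
    exact G192aux.part1 W
      (h aMat (by simp)) (h bMat (by simp)) (h cMat (by simp)) (h dMat (by simp))
  refine ⟨p1, ?_⟩
  intro X hX
  -- Schur: take an eigenvalue of `X`, its eigenspace is invariant and nonzero, hence `⊤`.
  obtain ⟨s, hs⟩ := Module.End.exists_eigenvalue (Matrix.mulVecLin X)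
  refine ⟨s, ?_⟩
  set f := Matrix.mulVecLin X with hf
  set W := Module.End.eigenspace f s with hW
  have hinv : ∀ M ∈ ({aMat, bMat, cMat, dMat} : Set (Matrix (Fin 4) (Fin 4) ℂ)),
      ∀ v ∈ W, (wedge2 M).mulVec v ∈ W := by
    intro M hM v hvW
    have hv' : X.mulVec v = s • v := by
      have := (Module.End.mem_eigenspace_iff).1 hvW
      simpa [hf, Matrix.mulVecLin_apply] using this
    rw [hW, Module.End.mem_eigenspace_iff]
    show f ((wedge2 M).mulVec v) = s • (wedge2 M).mulVec v
    rw [hf]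
    simp only [Matrix.mulVecLin_apply]
    rw [Matrix.mulVec_mulVec, hX M hM, ← Matrix.mulVec_mulVec, hv',
      Matrix.mulVec_smul]
  have hWtop : W = ⊤ := by
    rcases p1 W hinv with hbot | htop
    · exact absurd hbot hs
    · exact htop
  -- every vector is an eigenvector, so `X = s • 1`.
  have hall : ∀ v : Fin 6 → ℂ, X.mulVec v = s • v := by
    intro v
    have hvW : v ∈ W := by rw [hWtop]; trivial
    have := (Module.End.mem_eigenspace_iff).1 hvW
    simpa [hf, Matrix.mulVecLin_apply] using this
  ext i j
  have h := congrFun (hall (Pi.single j 1)) i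
  rw [Matrix.mulVec_single] at h
  simpa [Pi.single_apply, Matrix.one_apply, mul_comm] using h
end
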